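/- Let β ∈ ℂ with β ∉ {0, 1, −1, i, −i}. Then there exist a unitary U in the one-qubit Clifford group, a complex number α with |α| > 1, and a nonzero scalar c ∈ ℂ such that U(e₀ + β·e₁) = c·(e₀ + α·e₁). -/

import Mathlib

/-!
Up to a nonzero scalar, `e₀ + β e₁` is the point `β` of the projective line, on which `X` acts by
`β ↦ 1/β` and `H` by the Cayley transform `β ↦ (1 - β)/(1 + β)`. So for `β ≠ 0` off the unit
circle, `U = 1` or `U = X` works. The Cayley transform maps the unit circle minus `-1` onto the
imaginary axis, meeting the unit circle only at the images `∓i` of `±i`. Hence for the remaining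
`β` the point `(1 - β)/(1 + β)` is nonzero and off the unit circle, and `U = H` or `U = XH` works.
-/

noncomputable section

lemma Matrix.cons_eq_smul_cons_one_div {K : Type*} [Field K] {a : K} (b : K) (ha : a ≠ 0) :
    ![a, b] = a • ![1, b / a] := by
  simp [ha, mul_div_cancel₀]

namespace Complex

lemma norm_one_sub_eq_norm_one_add_iff {z : ℂ} : ‖1 - z‖ = ‖1 + z‖ ↔ z.re = 0 := by
  rw [← sq_eq_sq₀ (norm_nonneg _) (norm_nonneg _), Complex.sq_norm, Complex.sq_norm,
    normSq_apply, normSq_apply]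
  simp only [sub_re, one_re, sub_im, one_im, zero_sub, mul_neg, neg_mul, neg_neg, add_re, add_im,
    zero_add, add_left_inj]
  constructor <;> intro h <;> nlinarith

lemma eq_I_or_eq_neg_I {z : ℂ} (hre : z.re = 0) (hz : ‖z‖ = 1) : z = I ∨ z = -I := by
  have him : z.im ^ 2 = 1 := by
    rw [← sq_norm_sub_sq_re, hz, hre]; norm_num
  rcases sq_eq_one_iff.mp him with h | h
  · exact Or.inl (ext hre h)
  · exact Or.inr (ext (by simp [hre]) (by simp [h]))

end Complex

namespace StabPaper

/-- The Hadamard matrix `H = (1/√2)·[[1,1],[1,−1]]`. -/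
def Hmat : Matrix (Fin 2) (Fin 2) ℂ :=
  ((Real.sqrt 2 : ℝ) : ℂ)⁻¹ • !![1, 1; 1, -1]

/-- The phase matrix `S = diag(1, i)`. -/
def Smat : Matrix (Fin 2) (Fin 2) ℂ := !![1, 0; 0, Complex.I]

def Xmat : Matrix (Fin 2) (Fin 2) ℂ := !![0, 1; 1, 0]

open Matrix

lemma ofReal_sqrt_two_ne_zero : ((Real.sqrt 2 : ℝ) : ℂ) ≠ 0 := by
  simp

lemma ofReal_sqrt_two_mul_self : ((Real.sqrt 2 : ℝ) : ℂ) * ((Real.sqrt 2 : ℝ) : ℂ) = 2 := by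
  norm_cast
  exact Real.mul_self_sqrt zero_le_two

lemma Hmat_mul_Hmat : Hmat * Hmat = 1 := by
  rw [Hmat, smul_mul_smul_comm, ← mul_inv, ofReal_sqrt_two_mul_self, mul_fin_two, one_fin_two]
  ext i j; fin_cases i <;> fin_cases j <;> norm_num

lemma Hmat_conjTranspose : Hmatᴴ = Hmat := by
  ext i j; fin_cases i <;> fin_cases j <;> simp [Hmat]

lemma Hmat_mem_unitaryGroup : Hmat ∈ unitaryGroup (Fin 2) ℂ := by
  rw [mem_unitaryGroup_iff, star_eq_conjTranspose, Hmat_conjTranspose, Hmat_mul_Hmat]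

lemma Smat_mem_unitaryGroup : Smat ∈ unitaryGroup (Fin 2) ℂ := by
  rw [mem_unitaryGroup_iff]
  ext i j; fin_cases i <;> fin_cases j <;> simp [Smat, mul_apply, Fin.sum_univ_two, star_apply]

lemma closure_le_unitaryGroup : Submonoid.closure {Hmat, Smat} ≤ unitaryGroup (Fin 2) ℂ :=
  Submonoid.closure_le.mpr <| Set.insert_subset Hmat_mem_unitaryGroup <|
    Set.singleton_subset_iff.mpr Smat_mem_unitaryGroup

lemma Smat_mul_Smat : Smat * Smat = !![1, 0; 0, -1] := by
  simp [Smat]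

lemma Hmat_mul_Smat_mul_Smat_mul_Hmat : Hmat * Smat * Smat * Hmat = Xmat := by
  rw [mul_assoc Hmat, Smat_mul_Smat, Hmat, smul_mul, smul_mul_smul_comm, ← mul_inv,
    ofReal_sqrt_two_mul_self, mul_fin_two, mul_fin_two, Xmat]
  ext i j; fin_cases i <;> fin_cases j <;> norm_num

lemma Hmat_mem_closure : Hmat ∈ Submonoid.closure {Hmat, Smat} :=
  Submonoid.subset_closure (by simp)

lemma Smat_mem_closure : Smat ∈ Submonoid.closure {Hmat, Smat} :=
  Submonoid.subset_closure (by simp)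

lemma Xmat_mem_closure : Xmat ∈ Submonoid.closure {Hmat, Smat} := by
  rw [← Hmat_mul_Smat_mul_Smat_mul_Hmat]
  exact mul_mem (mul_mem (mul_mem Hmat_mem_closure Smat_mem_closure) Smat_mem_closure)
    Hmat_mem_closure

lemma Xmat_mulVec (γ : ℂ) : Xmat *ᵥ ![1, γ] = ![γ, 1] := by
  rw [Xmat, mulVec_fin_two]
  simp

lemma Hmat_mulVec (β : ℂ) : Hmat *ᵥ ![1, β] = ((Real.sqrt 2 : ℝ) : ℂ)⁻¹ • ![1 + β, 1 - β] := by
  rw [Hmat, smul_mulVec, mulVec_fin_two]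
  simp [sub_eq_add_neg]

lemma exists_clifford_of_mulVec_eq_smul {U : Matrix (Fin 2) (Fin 2) ℂ} {β γ c : ℂ}
    (hU : U ∈ Submonoid.closure {Hmat, Smat}) (hc : c ≠ 0) (hγ : γ ≠ 0) (hγ₁ : ‖γ‖ ≠ 1)
    (h : U *ᵥ ![1, β] = c • ![1, γ]) :
    ∃ U : Matrix (Fin 2) (Fin 2) ℂ, U ∈ Submonoid.closure {Hmat, Smat} ∧
      U ∈ Matrix.unitaryGroup (Fin 2) ℂ ∧
      ∃ (α c : ℂ), 1 < ‖α‖ ∧ c ≠ 0 ∧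
        U.mulVec ![1, β] = c • ![1, α] := by
  rcases hγ₁.lt_or_gt with hlt | hgt
  · have hXU : Xmat * U ∈ Submonoid.closure {Hmat, Smat} := mul_mem Xmat_mem_closure hU
    refine ⟨Xmat * U, hXU, closure_le_unitaryGroup hXU, 1 / γ, c * γ, ?_, mul_ne_zero hc hγ, ?_⟩
    · rw [norm_div, norm_one]
      exact one_lt_one_div (norm_pos_iff.mpr hγ) hlt
    · rw [← mulVec_mulVec, h, mulVec_smul, Xmat_mulVec, cons_eq_smul_cons_one_div _ hγ, smul_smul]
  · exact ⟨U, hU, closure_le_unitaryGroup hU, γ, c, hgt, hc, h⟩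

/-- Let `β ∈ ℂ` with `β ∉ {0, 1, −1, i, −i}`. Then there exist a unitary `U` in the
one-qubit Clifford group (the group generated by `H` and `S`; since this group is finite,
it coincides with the multiplicative closure of `{H, S}` used here), a complex number `α`
with `|α| > 1`, and a nonzero scalar `c` such that `U(e₀ + β·e₁) = c·(e₀ + α·e₁)`. -/
theorem clifford_normal_form (β : ℂ) (h0 : β ≠ 0) (h1 : β ≠ 1) (h2 : β ≠ -1)
    (h3 : β ≠ Complex.I) (h4 : β ≠ -Complex.I) :
    ∃ U : Matrix (Fin 2) (Fin 2) ℂ, U ∈ Submonoid.closure {Hmat, Smat} ∧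
      U ∈ Matrix.unitaryGroup (Fin 2) ℂ ∧
      ∃ (α c : ℂ), 1 < ‖α‖ ∧ c ≠ 0 ∧
        U.mulVec ![1, β] = c • ![1, α] := by
  by_cases hβ : ‖β‖ = 1
  · have hplus : 1 + β ≠ 0 := fun h => h2 (by linear_combination h)
    have hminus : 1 - β ≠ 0 := fun h => h1 (by linear_combination -h)
    have hcayley : ‖(1 - β) / (1 + β)‖ ≠ 1 := by
      rw [norm_div, Ne, div_eq_one_iff_eq (norm_ne_zero_iff.mpr hplus),
        Complex.norm_one_sub_eq_norm_one_add_iff]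
      intro hre
      rcases Complex.eq_I_or_eq_neg_I hre hβ with h | h
      exacts [h3 h, h4 h]
    refine exists_clifford_of_mulVec_eq_smul Hmat_mem_closure
      (mul_ne_zero (inv_ne_zero ofReal_sqrt_two_ne_zero) hplus) (div_ne_zero hminus hplus)
      hcayley ?_
    rw [Hmat_mulVec, cons_eq_smul_cons_one_div _ hplus, smul_smul]
  · exact exists_clifford_of_mulVec_eq_smul (one_mem _) one_ne_zero h0 hβ (by simp)

end StabPaper
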